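/- arXiv:2501.13730 — 2 statements merged into one kernel-verified Lean document; each statement's English description precedes it below -/
import Mathlib

section
/- Let G be a graph with maximum degree at most 3, Cheeger constant at least h > 0, and n vertices (with no isolated vertices). Suppose G is a minor of Q_d. Then n ≤ (10√2·e)/(√π·h) · 2^d/√d. -/
open SimpleGraph

/-- `H` is a minor of `G`: there is a model of `H` in `G`, i.e. a family of nonempty,
pairwise-disjoint connected branch sets in `G` indexed by the vertices of `H`, with
adjacent vertices of `H` having branch sets joined by an edge of `G`. -/
def SimpleGraph.IsMinorOf {V W : Type*} (H : SimpleGraph V) (G : SimpleGraph W) : Prop :=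
  ∃ μ : V → Set W,
    (∀ a, (G.induce (μ a)).Connected) ∧
    (Pairwise fun a b => Disjoint (μ a) (μ b)) ∧
    ∀ ⦃a b⦄, H.Adj a b → ∃ x ∈ μ a, ∃ y ∈ μ b, G.Adj x y

/-- A combinatorial embedding of `H` into `G`: vertices map injectively to vertices,
each edge maps to a walk (road) between the images of its endpoints, roads of
non-adjacent edges are vertex-disjoint, and the image of a vertex not lying on an
edge avoids the road of that edge. -/
structure CombEmbedding {V W : Type*} (H : SimpleGraph V) (G : SimpleGraph W) where
  vmap : V → W
  inj : Function.Injective vmap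
  road : ∀ ⦃a b⦄, H.Adj a b → G.Walk (vmap a) (vmap b)
  disj : ∀ ⦃a b c d⦄ (h₁ : H.Adj a b) (h₂ : H.Adj c d),
    a ≠ c → a ≠ d → b ≠ c → b ≠ d →
    ∀ x, x ∈ (road h₁).support → x ∉ (road h₂).support
  iso : ∀ ⦃a b⦄ (h : H.Adj a b) (w : V), w ≠ a → w ≠ b → vmap w ∉ (road h).support

/-- Cartesian (box) product of a family of graphs: two functions are adjacent iff they
differ in exactly one coordinate, where they are adjacent. -/
def prodGraph {ι : Type*} {V : ι → Type*} (G : ∀ i, SimpleGraph (V i)) :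
    SimpleGraph (∀ i, V i) where
  Adj x y := ∃ i, (G i).Adj (x i) (y i) ∧ ∀ j, j ≠ i → x j = y j
  symm := by
    constructor
    rintro x y ⟨i, hadj, hj⟩
    exact ⟨i, hadj.symm, fun j hji => (hj j hji).symm⟩
  loopless := by
    constructor
    rintro x ⟨i, hadj, -⟩
    exact (G i).loopless.irrefl _ hadj

/-- The `d`-dimensional hypercube: vertices are `{0,1}`-strings of length `d`, adjacent iff
they differ in exactly one coordinate. -/
def hypercube (d : ℕ) : SimpleGraph (Fin d → Bool) :=
  prodGraph fun _ => (⊤ : SimpleGraph Bool)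

/-!
Look at the branch sets of a model of `G` in `Q_d` through the Hamming weight, which changes
by at most one along an edge of `Q_d`. Choose a median level `t`: the branch
sets lying entirely below `t`, and those lying entirely above `t`, each form at most half of
the vertices. Since branch sets are connected, an edge of `G` leaving either of these two
sets ends at a branch set meeting level `t`, so with maximum degree `3` the Cheeger inequality
for both sets, together with `h ≤ 3`, gives `h n ≤ 9 M`, where `M` is the number of branch sets meeting level `t`. These branch sets are
disjoint, hence `M ≤ (d choose t) ≤ (d choose ⌊d/2⌋) ≤ 2^d / √d`, and `9 √π ≤ 18 ≤ 10 √2 e`.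
-/
namespace Nat

theorem centralBinom_sq_mul_le (m : ℕ) : centralBinom m ^ 2 * (3 * m + 1) ≤ 16 ^ m := by
  induction m with
  | zero => simp
  | succ m ih =>
    have hstep : (m + 1) ^ 2 * (centralBinom (m + 1) ^ 2 * (3 * (m + 1) + 1))
        ≤ (m + 1) ^ 2 * 16 ^ (m + 1) :=
      calc (m + 1) ^ 2 * (centralBinom (m + 1) ^ 2 * (3 * (m + 1) + 1))
          = ((m + 1) * centralBinom (m + 1)) ^ 2 * (3 * m + 4) := by ring
        _ = (2 * (2 * m + 1)) ^ 2 * (3 * m + 4) * centralBinom m ^ 2 := by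
            rw [succ_mul_centralBinom_succ]; ring
        _ ≤ (m + 1) ^ 2 * (16 * (centralBinom m ^ 2 * (3 * m + 1))) := by
            nlinarith [Nat.zero_le (centralBinom m ^ 2)]
        _ ≤ (m + 1) ^ 2 * (16 * 16 ^ m) := by gcongr
        _ = (m + 1) ^ 2 * 16 ^ (m + 1) := by ring
    exact Nat.le_of_mul_le_mul_left hstep (by positivity)

theorem centralBinom_succ_eq_two_mul_choose (m : ℕ) :
    centralBinom (m + 1) = 2 * (2 * m + 1).choose m := by
  rw [centralBinom_eq_two_mul_choose, show 2 * (m + 1) = 2 * m + 1 + 1 by ring,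
    choose_succ_succ, choose_symm_half]
  ring

theorem choose_half_sq_mul_le (d : ℕ) : d.choose (d / 2) ^ 2 * d ≤ 4 ^ d := by
  rcases Nat.even_or_odd' d with ⟨m, rfl | rfl⟩
  · rw [show 2 * m / 2 = m by omega, ← centralBinom_eq_two_mul_choose, pow_mul]
    calc centralBinom m ^ 2 * (2 * m) ≤ centralBinom m ^ 2 * (3 * m + 1) := by gcongr; omega
      _ ≤ (4 ^ 2) ^ m := centralBinom_sq_mul_le m
  · rw [show (2 * m + 1) / 2 = m by omega]
    have h := centralBinom_sq_mul_le (m + 1)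
    rw [centralBinom_succ_eq_two_mul_choose] at h
    have h4 : 4 * ((2 * m + 1).choose m ^ 2 * (2 * m + 1)) ≤ 4 * 4 ^ (2 * m + 1) :=
      calc 4 * ((2 * m + 1).choose m ^ 2 * (2 * m + 1))
          ≤ (2 * (2 * m + 1).choose m) ^ 2 * (3 * (m + 1) + 1) := by
            rw [mul_pow]; nlinarith [Nat.zero_le ((2 * m + 1).choose m ^ 2)]
        _ ≤ 16 ^ (m + 1) := h
        _ = 4 * 4 ^ (2 * m + 1) := by rw [pow_succ, pow_succ, pow_mul]; ring
    omega

theorem choose_half_mul_sqrt_le (d : ℕ) : (d.choose (d / 2) : ℝ) * √d ≤ 2 ^ d := by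
  have h : (d.choose (d / 2) : ℝ) ^ 2 * d ≤ (2 ^ 2) ^ d := by
    rw [show (2 : ℝ) ^ 2 = 4 by norm_num]; exact_mod_cast choose_half_sq_mul_le d
  rwa [← pow_le_pow_iff_left₀ (by positivity) (by positivity) two_ne_zero, mul_pow,
    Real.sq_sqrt d.cast_nonneg, ← pow_mul, mul_comm d, pow_mul]

end Nat

namespace SimpleGraph

variable {V W : Type*}

def edgeBoundary (G : SimpleGraph V) (U : Set V) : Set (Sym2 V) :=
  {e | e ∈ G.edgeSet ∧ ∃ a ∈ U, ∃ b ∈ Uᶜ, e = s(a, b)}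

def CheegerConstantGE [Fintype V] (G : SimpleGraph V) (h : ℝ) : Prop :=
  ∀ U : Set V, U.Nonempty → 2 * U.ncard ≤ Fintype.card V → h * U.ncard ≤ (G.edgeBoundary U).ncard

lemma ncard_incidenceSet (G : SimpleGraph V) (v : V) :
    (G.incidenceSet v).ncard = (G.neighborSet v).ncard := by
  classical exact Set.ncard_congr' (G.incidenceSetEquivNeighborSet v)

lemma ncard_edgeBoundary_le [Finite V] {G : SimpleGraph V} {Δ : ℕ}
    (hdeg : ∀ v, (G.neighborSet v).ncard ≤ Δ) {U M : Set V}
    (hM : ∀ ⦃a b⦄, G.Adj a b → a ∈ U → b ∉ U → a ∈ M ∨ b ∈ M) :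
    (G.edgeBoundary U).ncard ≤ Δ * M.ncard := by
  classical
  have hM_fin := M.toFinite
  have hsub : G.edgeBoundary U ⊆ ⋃ c ∈ hM_fin.toFinset, G.incidenceSet c := by
    rintro _ ⟨he, a, ha, b, hb, rfl⟩
    rcases hM he ha hb with haM | hbM
    · exact Set.mem_biUnion (by simpa using haM) ⟨he, Sym2.mem_mk_left a b⟩
    · exact Set.mem_biUnion (by simpa using hbM) ⟨he, Sym2.mem_mk_right a b⟩
  calc (G.edgeBoundary U).ncard
      ≤ (⋃ c ∈ hM_fin.toFinset, G.incidenceSet c).ncard := Set.ncard_le_ncard hsub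
    _ ≤ ∑ c ∈ hM_fin.toFinset, (G.incidenceSet c).ncard := Finset.set_ncard_biUnion_le _ _
    _ ≤ hM_fin.toFinset.card • Δ :=
        Finset.sum_le_card_nsmul _ _ _ fun c _ => (G.ncard_incidenceSet c).trans_le (hdeg c)
    _ = Δ * M.ncard := by rw [Set.ncard_eq_toFinset_card M hM_fin, smul_eq_mul, mul_comm]

lemma CheegerConstantGE.mul_ncard_le [Fintype V] {G : SimpleGraph V} {Δ : ℕ} {h : ℝ}
    (hG : G.CheegerConstantGE h) (hdeg : ∀ v, (G.neighborSet v).ncard ≤ Δ) {U M : Set V}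
    (hU : 2 * U.ncard ≤ Fintype.card V)
    (hM : ∀ ⦃a b⦄, G.Adj a b → a ∈ U → b ∉ U → a ∈ M ∨ b ∈ M) :
    h * U.ncard ≤ Δ * M.ncard := by
  rcases U.eq_empty_or_nonempty with rfl | hne
  · simp only [Set.ncard_empty, Nat.cast_zero, mul_zero]
    positivity
  exact (hG U hne hU).trans (by exact_mod_cast ncard_edgeBoundary_le hdeg hM)

lemma CheegerConstantGE.le_of_adj [Fintype V] {G : SimpleGraph V} {Δ : ℕ} {h : ℝ}
    (hG : G.CheegerConstantGE h) (hdeg : ∀ v, (G.neighborSet v).ncard ≤ Δ) {u v : V}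
    (huv : G.Adj u v) : h ≤ Δ := by
  have : Nontrivial V := ⟨u, v, huv.ne⟩
  have hu : 2 * ({u} : Set V).ncard ≤ Fintype.card V := by
    rw [Set.ncard_singleton]; exact Fintype.one_lt_card
  simpa using hG.mul_ncard_le hdeg hu fun _ _ _ ha _ => .inl ha

theorem Walk.exists_mem_support_eq {G : SimpleGraph V} {f : V → ℕ}
    (hf : ∀ ⦃x y⦄, G.Adj x y → f y ≤ f x + 1) {t : ℕ} {x y : V} (p : G.Walk x y)
    (hx : f x ≤ t) (hy : t ≤ f y) : ∃ z ∈ p.support, f z = t := by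
  induction p with
  | nil => exact ⟨_, Walk.start_mem_support _, le_antisymm hx hy⟩
  | @cons u v w huv p ih =>
    rcases hx.eq_or_lt with hu | hu
    · exact ⟨u, Walk.start_mem_support _, hu⟩
    · obtain ⟨z, hz, hzt⟩ := ih ((hf huv).trans hu) hy
      exact ⟨z, List.mem_cons_of_mem _ hz, hzt⟩

theorem Preconnected.exists_eq_of_induce {G : SimpleGraph V} {f : V → ℕ}
    (hf : ∀ ⦃x y⦄, G.Adj x y → f y ≤ f x + 1) {S : Set V} (hS : (G.induce S).Preconnected)
    {x y : V} (hx : x ∈ S) (hy : y ∈ S) {t : ℕ} (hxt : f x ≤ t) (hty : t ≤ f y) :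
    ∃ z ∈ S, f z = t := by
  obtain ⟨p⟩ := hS ⟨x, hx⟩ ⟨y, hy⟩
  obtain ⟨z, -, hz⟩ := p.exists_mem_support_eq (f := f ∘ Subtype.val) (fun _ _ h => hf h) hxt hty
  exact ⟨z, z.2, hz⟩

section Levels

variable (μ : V → Set W) (f : W → ℕ) (t : ℕ)

def branchesBelow : Set V := {a | ∀ x ∈ μ a, f x < t}

def branchesAbove : Set V := {a | ∀ x ∈ μ a, t < f x}

def branchesAt : Set V := {a | ∃ x ∈ μ a, f x = t}

variable {μ f t} {G : SimpleGraph W}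

lemma mem_branchesAt_of_notMem (hf : ∀ ⦃x y⦄, G.Adj x y → f y ≤ f x + 1)
    (hconn : ∀ a, (G.induce (μ a)).Preconnected) {a : V} (hA : a ∉ branchesBelow μ f t)
    (hB : a ∉ branchesAbove μ f t) : a ∈ branchesAt μ f t := by
  simp only [branchesBelow, branchesAbove, Set.mem_ofPred_eq, not_forall, not_lt] at hA hB
  obtain ⟨x, hx, hxt⟩ := hA
  obtain ⟨y, hy, hyt⟩ := hB
  exact (hconn a).exists_eq_of_induce hf hy hx hyt hxt

lemma mem_branchesAt_of_adj_below (hf : ∀ ⦃x y⦄, G.Adj x y → f y ≤ f x + 1)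
    (hconn : ∀ a, (G.induce (μ a)).Preconnected) {a b : V} {x y : W} (hx : x ∈ μ a) (hy : y ∈ μ b)
    (hxy : G.Adj x y) (ha : a ∈ branchesBelow μ f t) (hb : b ∉ branchesBelow μ f t) :
    b ∈ branchesAt μ f t := by
  simp only [branchesBelow, Set.mem_ofPred_eq, not_forall, not_lt] at hb
  obtain ⟨z, hz, hzt⟩ := hb
  exact (hconn b).exists_eq_of_induce hf hy hz ((hf hxy).trans (ha x hx)) hzt

lemma mem_branchesAt_of_adj_above (hf : ∀ ⦃x y⦄, G.Adj x y → f y ≤ f x + 1)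
    (hconn : ∀ a, (G.induce (μ a)).Preconnected) {a b : V} {x y : W} (hx : x ∈ μ a) (hy : y ∈ μ b)
    (hxy : G.Adj x y) (ha : a ∈ branchesAbove μ f t) (hb : b ∉ branchesAbove μ f t) :
    b ∈ branchesAt μ f t := by
  simp only [branchesAbove, Set.mem_ofPred_eq, not_forall, not_lt] at hb
  obtain ⟨z, hz, hzt⟩ := hb
  exact (hconn b).exists_eq_of_induce hf hz hy hzt
    (Nat.lt_succ_iff.mp ((ha x hx).trans_le (hf hxy.symm)))

lemma ncard_branchesBelow_add_ncard_branchesAbove_add_ncard_branchesAt [Fintype V]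
    (hf : ∀ ⦃x y⦄, G.Adj x y → f y ≤ f x + 1) (hconn : ∀ a, (G.induce (μ a)).Preconnected)
    (hne : ∀ a, (μ a).Nonempty) :
    (branchesBelow μ f t).ncard + (branchesAbove μ f t).ncard + (branchesAt μ f t).ncard =
      Fintype.card V := by
  have hAB : Disjoint (branchesBelow μ f t) (branchesAbove μ f t) :=
    Set.disjoint_left.mpr fun a hA hB =>
      have ⟨x, hx⟩ := hne a; (hA x hx).asymm (hB x hx)
  have hABM : Disjoint (branchesBelow μ f t ∪ branchesAbove μ f t) (branchesAt μ f t) := by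
    refine Set.disjoint_left.mpr fun a hAB ⟨x, hx, hxt⟩ => ?_
    rcases hAB with hA | hB
    · exact (hA x hx).ne hxt
    · exact (hB x hx).ne' hxt
  have hcover : branchesBelow μ f t ∪ branchesAbove μ f t ∪ branchesAt μ f t = Set.univ :=
    Set.eq_univ_of_forall fun a => by
      by_cases hA : a ∈ branchesBelow μ f t
      · exact .inl (.inl hA)
      by_cases hB : a ∈ branchesAbove μ f t
      · exact .inl (.inr hB)
      exact .inr (mem_branchesAt_of_notMem hf hconn hA hB)
  rw [← Set.ncard_union_eq hAB, ← Set.ncard_union_eq hABM, hcover, Set.ncard_univ,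
    Nat.card_eq_fintype_card]

lemma exists_balanced_level [Fintype V] (hne : ∀ a, (μ a).Nonempty) {D : ℕ}
    (hD : ∀ x, f x ≤ D) :
    ∃ t, 2 * (branchesBelow μ f t).ncard ≤ Fintype.card V ∧
      2 * (branchesAbove μ f t).ncard ≤ Fintype.card V := by
  let P s := 2 * (branchesBelow μ f s).ncard ≤ Fintype.card V
  have hbelow_zero : branchesBelow μ f 0 = ∅ := Set.eq_empty_of_forall_notMem fun a ha =>
    have ⟨x, hx⟩ := hne a; Nat.not_lt_zero _ (ha x hx)
  have hP0 : P 0 := by simp [P, hbelow_zero]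
  refine ⟨Nat.findGreatest P D, Nat.findGreatest_spec (Nat.zero_le D) hP0, ?_⟩
  set t := Nat.findGreatest P D
  rcases (Nat.findGreatest_le D : t ≤ D).eq_or_lt with htD | htD
  · have habove : branchesAbove μ f t = ∅ := Set.eq_empty_of_forall_notMem fun a ha =>
      have ⟨x, hx⟩ := hne a; (ha x hx).not_ge ((hD x).trans_eq htD.symm)
    simp [habove]
  · have hnext : ¬ P (t + 1) := Nat.findGreatest_is_greatest (Nat.lt_succ_self t) htD
    have hdisj : Disjoint (branchesBelow μ f (t + 1)) (branchesAbove μ f t) :=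
      Set.disjoint_left.mpr fun a hA hB =>
        have ⟨x, hx⟩ := hne a; (hA x hx).not_ge (hB x hx)
    have hsum : (branchesBelow μ f (t + 1)).ncard + (branchesAbove μ f t).ncard ≤
        Fintype.card V := by
      rw [← Set.ncard_union_eq hdisj, ← Nat.card_eq_fintype_card, ← Set.ncard_univ]
      exact Set.ncard_le_ncard (Set.subset_univ _)
    omega

lemma ncard_branchesAt_le [Finite W] (hdisj : Pairwise fun a b => Disjoint (μ a) (μ b)) :
    (branchesAt μ f t).ncard ≤ (f ⁻¹' {t}).ncard := by
  rcases (branchesAt μ f t).eq_empty_or_nonempty with hempty | ⟨_, x, -⟩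
  · simp [hempty]
  have : Nonempty W := ⟨x⟩
  have hwit : ∀ a ∈ branchesAt μ f t, ∃ x ∈ μ a, f x = t := fun _ ha => ha
  choose! g hgμ hgt using hwit
  refine Set.ncard_le_ncard_of_injOn g hgt fun a ha b hb hab => ?_
  by_contra hne
  exact Set.disjoint_left.mp (hdisj hne) (hgμ a ha) (hab ▸ hgμ b hb)

end Levels

theorem IsMinorOf.exists_cheeger_mul_card_le [Fintype V] [Finite W] {H : SimpleGraph V}
    {G : SimpleGraph W} {Δ : ℕ} {h : ℝ} (hminor : H.IsMinorOf G)
    (hdeg : ∀ v, (H.neighborSet v).ncard ≤ Δ) (hiso : ∀ v, ∃ u, H.Adj v u)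
    (hH : H.CheegerConstantGE h) {f : W → ℕ} (hf : ∀ ⦃x y⦄, G.Adj x y → f y ≤ f x + 1) :
    ∃ t, h * Fintype.card V ≤ 3 * Δ * (f ⁻¹' {t}).ncard := by
  obtain ⟨μ, hconn, hdisj, hadj⟩ := hminor
  have hpre a := (hconn a).preconnected
  have hne a : (μ a).Nonempty := Set.nonempty_coe_sort.mp (hconn a).nonempty
  obtain ⟨D, hD⟩ := (Set.finite_range f).bddAbove
  obtain ⟨t, hbelow, habove⟩ := exists_balanced_level hne fun x => hD ⟨x, rfl⟩
  have hcutBelow : h * (branchesBelow μ f t).ncard ≤ Δ * (branchesAt μ f t).ncard :=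
    hH.mul_ncard_le hdeg hbelow fun a b hab ha hb =>
      have ⟨_, hx, _, hy, hxy⟩ := hadj hab
      .inr (mem_branchesAt_of_adj_below hf hpre hx hy hxy ha hb)
  have hcutAbove : h * (branchesAbove μ f t).ncard ≤ Δ * (branchesAt μ f t).ncard :=
    hH.mul_ncard_le hdeg habove fun a b hab ha hb =>
      have ⟨_, hx, _, hy, hxy⟩ := hadj hab
      .inr (mem_branchesAt_of_adj_above hf hpre hx hy hxy ha hb)
  have hcutAt : h * (branchesAt μ f t).ncard ≤ Δ * (branchesAt μ f t).ncard := by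
    rcases (branchesAt μ f t).eq_empty_or_nonempty with hempty | ⟨a, -⟩
    · simp [hempty]
    obtain ⟨b, hab⟩ := hiso a
    exact mul_le_mul_of_nonneg_right (hH.le_of_adj hdeg hab) (Nat.cast_nonneg _)
  have hlevel : ((branchesAt μ f t).ncard : ℝ) ≤ (f ⁻¹' {t}).ncard := by
    exact_mod_cast ncard_branchesAt_le hdisj
  refine ⟨t, ?_⟩
  rw [← ncard_branchesBelow_add_ncard_branchesAbove_add_ncard_branchesAt hf hpre hne]
  push_cast
  nlinarith [(Nat.cast_nonneg Δ : (0 : ℝ) ≤ Δ)]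

end SimpleGraph

def hammingWeight {d : ℕ} (x : Fin d → Bool) : ℕ := (Finset.univ.filter fun i => x i).card

lemma hammingWeight_le_succ_of_adj {d : ℕ} {x y : Fin d → Bool} (hxy : (hypercube d).Adj x y) :
    hammingWeight y ≤ hammingWeight x + 1 := by
  obtain ⟨i, -, hj⟩ := hxy
  calc hammingWeight y ≤ (insert i (Finset.univ.filter fun j => x j)).card := by
        refine Finset.card_le_card fun j hj' => ?_
        rcases eq_or_ne j i with rfl | hji
        · exact Finset.mem_insert_self j _
        · simp_all
    _ ≤ hammingWeight x + 1 := Finset.card_insert_le _ _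

lemma ncard_hammingWeight_preimage_le (d t : ℕ) :
    (hammingWeight ⁻¹' {t} : Set (Fin d → Bool)).ncard ≤ d.choose t := by
  have hinj : Set.InjOn (fun x : Fin d → Bool => Finset.univ.filter fun i => x i)
      (hammingWeight ⁻¹' {t}) := fun x _ y _ hxy => by
    funext i
    simpa using congrArg (i ∈ ·) hxy
  calc (hammingWeight ⁻¹' {t} : Set (Fin d → Bool)).ncard
      ≤ (((Finset.univ : Finset (Fin d)).powersetCard t : Finset (Finset (Fin d))) :
          Set (Finset (Fin d))).ncard :=
        Set.ncard_le_ncard_of_injOn _ (fun x hx => by simpa [hammingWeight] using hx) hinj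
    _ = d.choose t := by simp

theorem expander_minor_bound_general {V : Type*} [Fintype V] (G : SimpleGraph V) (n : ℕ)
    (hn : Fintype.card V = n)
    (hdeg : ∀ v, (G.neighborSet v).ncard ≤ 3)
    (hiso : ∀ v, ∃ u, G.Adj v u)
    (h : ℝ)
    (hCheeger : ∀ U : Set V, U.Nonempty → 2 * U.ncard ≤ Fintype.card V →
      h * U.ncard ≤
        ({e : Sym2 V | e ∈ G.edgeSet ∧ ∃ a ∈ U, ∃ b ∈ Uᶜ, e = s(a, b)}.ncard : ℝ))
    (d : ℕ) (hminor : G.IsMinorOf (hypercube d)) :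
    (n : ℝ) * h * Real.sqrt Real.pi * Real.sqrt d ≤
      10 * Real.sqrt 2 * Real.exp 1 * 2 ^ d := by
  obtain ⟨t, ht⟩ := hminor.exists_cheeger_mul_card_le hdeg hiso hCheeger
    (f := hammingWeight) fun _ _ => hammingWeight_le_succ_of_adj
  have hlevel : ((hammingWeight ⁻¹' {t} : Set (Fin d → Bool)).ncard : ℝ) ≤ d.choose (d / 2) := by
    exact_mod_cast (ncard_hammingWeight_preimage_le d t).trans (Nat.choose_le_middle t d)
  have hsqrt_pi : √Real.pi ≤ 2 := Real.sqrt_le_iff.mpr ⟨by norm_num, by nlinarith [Real.pi_le_four]⟩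
  have hconst : (18 : ℝ) ≤ 10 * √2 * Real.exp 1 := by
    nlinarith [Real.one_lt_sqrt_two, Real.add_one_le_exp 1]
  have hbound : h * n ≤ 9 * d.choose (d / 2) := by
    rw [hn] at ht; push_cast at ht; linarith
  calc n * h * √Real.pi * √d = h * n * √Real.pi * √d := by ring
    _ ≤ 9 * d.choose (d / 2) * 2 * √d := by gcongr ?_ * ?_ * _
    _ = 18 * (d.choose (d / 2) * √d) := by ring
    _ ≤ 18 * 2 ^ d := by gcongr; exact Nat.choose_half_mul_sqrt_le d
    _ ≤ 10 * √2 * Real.exp 1 * 2 ^ d := by gcongr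

/-- An expander bound: a graph with max degree ≤ 3, Cheeger constant ≥ h, no isolated
vertices and n vertices that is a minor of Q_d satisfies
n ≤ (10 √2 e)/(√π h) · 2^d/√d. -/
theorem expander_minor_bound {V : Type*} [Fintype V] (G : SimpleGraph V) (n : ℕ)
    (hn : Fintype.card V = n)
    (hdeg : ∀ v, (G.neighborSet v).ncard ≤ 3)
    (hiso : ∀ v, ∃ u, G.Adj v u)
    (h : ℝ) (hh : 0 < h)
    (hCheeger : ∀ U : Set V, U.Nonempty → 2 * U.ncard ≤ Fintype.card V →
      h * U.ncard ≤
        ({e : Sym2 V | e ∈ G.edgeSet ∧ ∃ a ∈ U, ∃ b ∈ Uᶜ, e = s(a, b)}.ncard : ℝ))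
    (d : ℕ) (hminor : G.IsMinorOf (hypercube d)) :
    (n : ℝ) * h * Real.sqrt Real.pi * Real.sqrt d ≤
      10 * Real.sqrt 2 * Real.exp 1 * 2 ^ d :=
  expander_minor_bound_general G n hn hdeg hiso h hCheeger d hminor
end

section
/- If H is a minor of G, then for any graph L, the Cartesian product H × L is a minor of G × L. -/
open SimpleGraph

/-! Given a model `μ` of `H` in `G`, take `μ a × {u}` as the branch set of `(a, u)`: it is a
copy of `μ a` in the `u`-th layer of `G □ L`, hence connected; branch sets in one layer are
disjoint because the `μ a` are, and different layers are disjoint. An `H`-edge inside a layer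
is realised by a copy of a `G`-edge, and an `L`-edge `u ~ v` at `a` by the edge
`(x, u) ~ (x, v)` for any `x ∈ μ a`, which exists since connected graphs are nonempty. -/

theorem SimpleGraph.Connected.induce_image {V V' : Type*} {G : SimpleGraph V}
    {G' : SimpleGraph V'} (φ : G →g G') {s : Set V} (hs : (G.induce s).Connected) :
    (G'.induce (φ '' s)).Connected :=
  hs.map (induceHom φ (Set.mapsTo_image φ s)) (Set.surjective_mapsTo_image_restrict φ s)

theorem SimpleGraph.Connected.induce_prod_singleton {α β : Type*} {G : SimpleGraph α}
    (H : SimpleGraph β) {s : Set α} (hs : (G.induce s).Connected) (b : β) :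
    ((G □ H).induce (s ×ˢ {b})).Connected := by
  rw [Set.prod_singleton]
  exact hs.induce_image (G.boxProdLeft H b).toHom

theorem Set.pairwise_disjoint_prod_singleton {ι α β : Type*} {μ : ι → Set α}
    (h : Pairwise fun i j => Disjoint (μ i) (μ j)) :
    Pairwise fun p q : ι × β => Disjoint (μ p.1 ×ˢ {p.2}) (μ q.1 ×ˢ {q.2}) := by
  rintro ⟨a, u⟩ ⟨b, v⟩ hne
  rw [Set.disjoint_prod, Set.disjoint_singleton]
  by_cases hab : a = b
  · subst hab
    exact Or.inr fun huv => hne (congrArg _ huv)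
  · exact Or.inl (h hab)

/-- Minors are preserved under box product with a fixed graph: if H ≤ G then
H □ L ≤ G □ L. -/
theorem minor_boxProd {V W U : Type*} (H : SimpleGraph V) (G : SimpleGraph W)
    (L : SimpleGraph U) (h : H.IsMinorOf G) : (H □ L).IsMinorOf (G □ L) := by
  obtain ⟨μ, hconn, hdisj, hadj⟩ := h
  refine ⟨fun p => μ p.1 ×ˢ {p.2}, fun p => (hconn p.1).induce_prod_singleton L p.2,
    Set.pairwise_disjoint_prod_singleton hdisj, ?_⟩
  rintro ⟨a, u⟩ ⟨b, v⟩ (⟨hab, rfl : u = v⟩ | ⟨huv, rfl : a = b⟩)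
  · obtain ⟨x, hx, y, hy, hxy⟩ := hadj hab
    exact ⟨(x, u), ⟨hx, rfl⟩, (y, u), ⟨hy, rfl⟩, boxProd_adj_left.2 hxy⟩
  · obtain ⟨⟨x, hx⟩⟩ := (hconn a).nonempty
    exact ⟨(x, u), ⟨hx, rfl⟩, (x, v), ⟨hx, rfl⟩, boxProd_adj_right.2 huv⟩
end
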